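/- Fix nonnegative integers a, b, c. Then there exists a constant C > 0 (depending only on (a,b,c)) such that for every ρ ≥ 1 and every failure-probability solution p for parameter ρ: p(a,b,c) ≤ C/ρ. -/

import Mathlib

/-!
Let `μ(a,b,c) = binom(c,2) + R(a,b,c)` be the total rate of coalescences. The coefficients of
the non-recombination terms of the recursion add up to exactly `μ`, so bounding the
probabilities in those terms by `1` turns the first-step equation into
`p(a,b,c+1) ≤ p(a+1,b+1,c) + 2μ(a,b,c+1) / (ρ (c+1))`.
Following recombinations down to `c = 0`, where `p = 0`, gives `p(a,b,c) ≤ C(a,b,c) / ρ`.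
-/

open scoped BigOperators

/-- A function `p : ℕ³ → [0,1]` is a failure-probability solution for parameter `ρ`:
it vanishes when there are no full fragments, and satisfies the first-step
recursion of the two-locus ancestral recombination graph.  Terms whose
coefficients contain a factor `a` (resp. `b`) vanish automatically when
`a = 0` (resp. `b = 0`) since the coefficients are `0`. -/
def IsFailureSolution (ρ : ℝ) (p : ℕ → ℕ → ℕ → ℝ) : Prop :=
  (∀ a b c, 0 ≤ p a b c ∧ p a b c ≤ 1) ∧
  (∀ a b, p a b 0 = 0) ∧
  (∀ a b c : ℕ, 1 ≤ c →
    (ρ * c / 2 + (c.choose 2 : ℝ) +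
        ((a : ℝ) * b + (a : ℝ) * c + (b : ℝ) * c + (a.choose 2 : ℝ) + (b.choose 2 : ℝ)))
        * p a b c
      = ρ * c / 2 * p (a + 1) (b + 1) (c - 1)
        + (a : ℝ) * (b : ℝ) * p (a - 1) (b - 1) (c + 1)
        + (a : ℝ) * ((a : ℝ) + 2 * (c : ℝ) - 1) / 2 * p (a - 1) b c
        + (b : ℝ) * ((b : ℝ) + 2 * (c : ℝ) - 1) / 2 * p a (b - 1) c
        + (c.choose 2 : ℝ))

lemma le_add_div_of_first_step {r μ s x y : ℝ} (hr : 0 < r) (hμ : 0 ≤ μ) (hx : 0 ≤ x)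
    (hs : s ≤ μ) (h : (r + μ) * x = r * y + s) : x ≤ y + μ / r := by
  rw [← sub_le_iff_le_add', le_div_iff₀ hr]
  nlinarith [mul_nonneg hμ hx]

noncomputable def coalescenceRate (a b c : ℕ) : ℝ :=
  (c.choose 2 : ℝ) +
    ((a : ℝ) * b + (a : ℝ) * c + (b : ℝ) * c + (a.choose 2 : ℝ) + (b.choose 2 : ℝ))

lemma coalescenceRate_nonneg (a b c : ℕ) : 0 ≤ coalescenceRate a b c := by
  unfold coalescenceRate
  positivity

/-- The constant in `p a b c ≤ failureConst a b c / ρ`, accumulated along the chain of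
recombinations `(a, b, c) → (a + 1, b + 1, c - 1) → ⋯ → (a + c, b + c, 0)`. -/
noncomputable def failureConst : ℕ → ℕ → ℕ → ℝ
  | _, _, 0 => 0
  | a, b, c + 1 => failureConst (a + 1) (b + 1) c + 2 * coalescenceRate a b (c + 1) / ↑(c + 1)

lemma failureConst_nonneg (a b c : ℕ) : 0 ≤ failureConst a b c := by
  induction c generalizing a b with
  | zero => exact le_rfl
  | succ c ih =>
    have := coalescenceRate_nonneg a b (c + 1)
    have := ih (a + 1) (b + 1)
    rw [failureConst]
    positivity

namespace IsFailureSolution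

variable {ρ : ℝ} {p : ℕ → ℕ → ℕ → ℝ}

lemma le_recombination_add (hp : IsFailureSolution ρ p) (hρ : 0 < ρ) (a b c : ℕ) :
    p a b (c + 1) ≤
      p (a + 1) (b + 1) c + coalescenceRate a b (c + 1) / (ρ * ↑(c + 1) / 2) := by
  have hrec := hp.2.2 a b (c + 1) c.succ_pos
  simp only [Nat.add_sub_cancel] at hrec
  have ha : (0 : ℝ) ≤ a := a.cast_nonneg
  have hb : (0 : ℝ) ≤ b := b.cast_nonneg
  have hc : (0 : ℝ) ≤ c := c.cast_nonneg
  have hA : 0 ≤ (a : ℝ) * (a + 2 * ↑(c + 1) - 1) / 2 := by push_cast; nlinarith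
  have hB : 0 ≤ (b : ℝ) * (b + 2 * ↑(c + 1) - 1) / 2 := by push_cast; nlinarith
  have hrate : (a : ℝ) * b + (a : ℝ) * (a + 2 * ↑(c + 1) - 1) / 2
      + (b : ℝ) * (b + 2 * ↑(c + 1) - 1) / 2 + ((c + 1).choose 2 : ℝ)
      = coalescenceRate a b (c + 1) := by
    simp only [coalescenceRate, Nat.cast_choose_two]
    ring
  refine le_add_div_of_first_step (by positivity) (coalescenceRate_nonneg a b (c + 1))
    (hp.1 a b (c + 1)).1 (s := (a : ℝ) * b * p (a - 1) (b - 1) (c + 1 + 1)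
      + (a : ℝ) * (a + 2 * ↑(c + 1) - 1) / 2 * p (a - 1) b (c + 1)
      + (b : ℝ) * (b + 2 * ↑(c + 1) - 1) / 2 * p a (b - 1) (c + 1) + ((c + 1).choose 2 : ℝ))
    ?_ (by rw [coalescenceRate]; linarith)
  rw [← hrate]
  linarith [mul_le_of_le_one_right (mul_nonneg ha hb) (hp.1 (a - 1) (b - 1) (c + 2)).2,
    mul_le_of_le_one_right hA (hp.1 (a - 1) b (c + 1)).2,
    mul_le_of_le_one_right hB (hp.1 a (b - 1) (c + 1)).2]

lemma le_failureConst_div (hp : IsFailureSolution ρ p) (hρ : 0 < ρ) (a b c : ℕ) :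
    p a b c ≤ failureConst a b c / ρ := by
  induction c generalizing a b with
  | zero => simp [hp.2.1, failureConst]
  | succ c ih =>
    calc p a b (c + 1)
        ≤ p (a + 1) (b + 1) c + coalescenceRate a b (c + 1) / (ρ * ↑(c + 1) / 2) :=
          hp.le_recombination_add hρ a b c
      _ ≤ failureConst (a + 1) (b + 1) c / ρ
            + coalescenceRate a b (c + 1) / (ρ * ↑(c + 1) / 2) := by
          gcongr
          exact ih (a + 1) (b + 1)
      _ = failureConst a b (c + 1) / ρ := by
          rw [failureConst]
          field_simp

end IsFailureSolution

/-- The probability that the coupling fails, started from `a` left half-fragments,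
`b` right half-fragments and `c` full fragments, is `O(1/ρ)`. -/
theorem failure_probability_le_C_div_rho (a b c : ℕ) :
    ∃ C : ℝ, 0 < C ∧ ∀ ρ : ℝ, 1 ≤ ρ → ∀ p : ℕ → ℕ → ℕ → ℝ,
      IsFailureSolution ρ p → p a b c ≤ C / ρ := by
  refine ⟨failureConst a b c + 1, by linarith [failureConst_nonneg a b c],
    fun ρ hρ p hp => ?_⟩
  have hρ0 : 0 < ρ := one_pos.trans_le hρ
  calc p a b c ≤ failureConst a b c / ρ := hp.le_failureConst_div hρ0 a b c
    _ ≤ (failureConst a b c + 1) / ρ := by gcongr; linarith
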